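/- Let y : ℕⁿ → ℝ be such that M_d(y) is positive definite (hence M_r(y) is positive definite for all r ≤ d). Then the following are equivalent: (i) for every r ≤ d and all multi-indices α, β with |α| ≤ r, |β| ≤ r and |max(α,β)| > r, the (α,β) entry of M_r(y)⁻¹ is zero; (ii) the orthonormal polynomials p_α associated with y, for all |α| ≤ d, have full triangular form, i.e., p_α = Σ_{γ ≤ α} ρ_{αγ} X^γ with the sum over γ ≤ α in the FG order. (Theorem 5.1, the full triangularity theorem.) -/

import Mathlib

open scoped BigOperators
open MvPolynomial Matrix

namespace Paper

/-- Total degree `|α|` of a multi-index `α`. -/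
def degSum {n : ℕ} (α : Fin n → ℕ) : ℕ := ∑ i, α i

lemma apply_le_degSum {n : ℕ} (α : Fin n → ℕ) (i : Fin n) : α i ≤ degSum α :=
  Finset.single_le_sum (fun _ _ => Nat.zero_le _) (Finset.mem_univ i)

noncomputable instance midxFintype (n d : ℕ) : Fintype {α : Fin n → ℕ // degSum α ≤ d} :=
  Fintype.ofInjective
    (fun a => (fun i => (⟨a.1 i, Nat.lt_succ_of_le (le_trans (apply_le_degSum a.1 i) a.2)⟩ :
        Fin (d+1))))
    (fun a b h => Subtype.ext (funext fun i => congrArg Fin.val (congrFun h i)))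

/-- The index set of the truncated moment matrix: multi-indices of total degree at most `d`. -/
abbrev MIdx (n d : ℕ) := {α : Fin n → ℕ // degSum α ≤ d}

/-- The truncated moment matrix `M_d(y)`. -/
def momMat (n d : ℕ) (y : (Fin n → ℕ) → ℝ) : Matrix (MIdx n d) (MIdx n d) ℝ :=
  Matrix.of fun a b => y (a.1 + b.1)

/-- The Riesz functional `L_y` on multivariate polynomials. -/
noncomputable def Ly {n : ℕ} (y : (Fin n → ℕ) → ℝ) (p : MvPolynomial (Fin n) ℝ) : ℝ :=
  ∑ m ∈ p.support, p.coeff m * y (fun i => m i)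

/-- The monomial `X^α`. -/
noncomputable def mono {n : ℕ} (α : Fin n → ℕ) : MvPolynomial (Fin n) ℝ := ∏ i, X i ^ α i

/-- The coefficient of `X^γ` in `p`. -/
noncomputable def coeffOf {n : ℕ} (p : MvPolynomial (Fin n) ℝ) (γ : Fin n → ℕ) : ℝ :=
  p.coeff (Finsupp.equivFunOnFinite.symm γ)

/-- Strict lexicographic order on multi-indices. -/
def lexLT {n : ℕ} (α β : Fin n → ℕ) : Prop :=
  ∃ i, (∀ j, j < i → α j = β j) ∧ α i < β i

/-- Strict graded lexicographic (GLex) order on multi-indices. -/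
def glexLT {n : ℕ} (α β : Fin n → ℕ) : Prop :=
  degSum α < degSum β ∨ (degSum α = degSum β ∧ lexLT α β)

/-- Graded lexicographic order (reflexive version). -/
def glexLE {n : ℕ} (α β : Fin n → ℕ) : Prop := glexLT α β ∨ α = β

/-- The product form (independence) property of `M_d(y)`:
`L_y(X^α) = ∏_i L_y(X_i^{α_i})` for all `|α| ≤ 2d`. -/
def ProductForm (n d : ℕ) (y : (Fin n → ℕ) → ℝ) : Prop :=
  ∀ α : Fin n → ℕ, degSum α ≤ 2*d → y α = ∏ i, y (Pi.single i (α i))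

/-- The family of orthonormal polynomials `(p_α)_{|α| ≤ d}` associated with `y`:
GLex-triangular, orthonormal, orthogonal to lower monomials, positive leading term. -/
structure IsONFamily (n d : ℕ) (y : (Fin n → ℕ) → ℝ)
    (p : (Fin n → ℕ) → MvPolynomial (Fin n) ℝ) : Prop where
  span : ∀ α, degSum α ≤ d → ∀ γ : Fin n → ℕ, coeffOf (p α) γ ≠ 0 → glexLE γ α
  orth : ∀ α β, degSum α ≤ d → degSum β ≤ d →
    Ly y (p α * p β) = if α = β then 1 else 0
  lower : ∀ α β, degSum α ≤ d → degSum β ≤ d → glexLT β α → Ly y (p α * mono β) = 0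
  pos : ∀ α, degSum α ≤ d → 0 < Ly y (p α * mono α)



-- Auxiliary lemmas
-- ORDER LEMMAS

lemma lexLT_irrefl {n : ℕ} (α : Fin n → ℕ) : ¬ lexLT α α := by
  rintro ⟨i, -, h⟩; exact lt_irrefl _ h

lemma lexLT_trans {n : ℕ} {α β γ : Fin n → ℕ} (h1 : lexLT α β) (h2 : lexLT β γ) :
    lexLT α γ := by
  obtain ⟨i, hi, hi'⟩ := h1
  obtain ⟨j, hj, hj'⟩ := h2
  rcases lt_trichotomy i j with h | h | h
  · exact ⟨i, fun k hk => (hi k hk).trans (hj k (hk.trans h)), hi'.trans_eq (hj i h)⟩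
  · subst h; exact ⟨i, fun k hk => (hi k hk).trans (hj k hk), hi'.trans hj'⟩
  · exact ⟨j, fun k hk => (hi k (hk.trans h)).trans (hj k hk), (hi j h).le.trans_lt hj'⟩

lemma lexLT_total {n : ℕ} {α β : Fin n → ℕ} (h : α ≠ β) : lexLT α β ∨ lexLT β α := by
  classical
  have hS : (Finset.univ.filter (fun i => α i ≠ β i)).Nonempty := by
    by_contra hc
    rw [Finset.not_nonempty_iff_eq_empty, Finset.filter_eq_empty_iff] at hc
    exact h (funext fun i => not_not.mp (hc (Finset.mem_univ i)))
  set i := (Finset.univ.filter (fun i => α i ≠ β i)).min' hS with hidef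
  have hmem := (Finset.univ.filter (fun i => α i ≠ β i)).min'_mem hS
  rw [Finset.mem_filter] at hmem
  have hlow : ∀ j, j < i → α j = β j := by
    intro j hji
    by_contra hc
    exact absurd (Finset.min'_le _ j (Finset.mem_filter.mpr ⟨Finset.mem_univ j, hc⟩)) (not_le.mpr hji)
  rcases lt_or_gt_of_ne hmem.2 with h' | h'
  · exact Or.inl ⟨i, hlow, h'⟩
  · exact Or.inr ⟨i, fun j hj => (hlow j hj).symm, h'⟩

lemma degSum_le_of_glexLE {n : ℕ} {α β : Fin n → ℕ} (h : glexLE α β) :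
    degSum α ≤ degSum β := by
  rcases h with (h | h) | rfl
  · exact h.le
  · exact h.1.le
  · exact le_rfl

lemma eq_of_le_of_degSum_eq {n : ℕ} {α β : Fin n → ℕ} (h : ∀ i, α i ≤ β i)
    (hd : degSum α = degSum β) : α = β := by
  funext i
  exact (Finset.sum_eq_sum_iff_of_le (fun i _ => h i)).mp hd i (Finset.mem_univ i)

lemma degSum_lt_max {n : ℕ} {γ α : Fin n → ℕ} (h : ¬ ∀ i, γ i ≤ α i) :
    degSum α < degSum (fun i => max (γ i) (α i)) := by
  push_neg at h
  obtain ⟨j, hj⟩ := h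
  exact Finset.sum_lt_sum (fun i _ => le_max_right _ _)
    ⟨j, Finset.mem_univ j, lt_max_iff.mpr (Or.inl hj)⟩


lemma Ly_eq {n : ℕ} (y : (Fin n → ℕ) → ℝ) (q : MvPolynomial (Fin n) ℝ) :
    Ly y q = Finsupp.linearCombination ℝ (fun m : Fin n →₀ ℕ => y (fun i => m i)) (AddMonoidAlgebra.coeff q) := by
  rw [Finsupp.linearCombination_apply, Finsupp.sum]
  rfl

lemma Ly_sum {n : ℕ} (y : (Fin n → ℕ) → ℝ) {ι : Type*} (s : Finset ι)
    (f : ι → MvPolynomial (Fin n) ℝ) :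
    Ly y (∑ x ∈ s, f x) = ∑ x ∈ s, Ly y (f x) := by
  simp [Ly_eq, map_sum, AddMonoidAlgebra.coeff_sum]

lemma Ly_smul {n : ℕ} (y : (Fin n → ℕ) → ℝ) (c : ℝ) (q : MvPolynomial (Fin n) ℝ) :
    Ly y (c • q) = c * Ly y q := by
  simp [Ly_eq, _root_.map_smul, smul_eq_mul, AddMonoidAlgebra.coeff_smul]

lemma mono_eq {n : ℕ} (α : Fin n → ℕ) :
    mono α = monomial (Finsupp.equivFunOnFinite.symm α) (1 : ℝ) := by
  rw [MvPolynomial.monomial_eq, _root_.map_one, one_mul, Finsupp.prod]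
  refine (Finset.prod_subset (Finset.subset_univ _) ?_).symm
  intro i _ hi
  have h0 : α i = 0 := by simpa using Finsupp.notMem_support_iff.mp hi
  rw [h0, pow_zero]

lemma mono_mul {n : ℕ} (α β : Fin n → ℕ) : mono α * mono β = mono (α + β) := by
  rw [mono, mono, mono, ← Finset.prod_mul_distrib]
  exact Finset.prod_congr rfl fun i _ => (pow_add _ _ _).symm

lemma Ly_mono {n : ℕ} (y : (Fin n → ℕ) → ℝ) (α : Fin n → ℕ) : Ly y (mono α) = y α := by
  rw [mono_eq, Ly]
  rw [MvPolynomial.support_monomial]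
  simp only [if_neg (one_ne_zero)]
  rw [Finset.sum_singleton, MvPolynomial.coeff_monomial, if_pos rfl, one_mul]
  congr 1

lemma coeff_eq_coeffOf {n : ℕ} (q : MvPolynomial (Fin n) ℝ) (m : Fin n →₀ ℕ) :
    q.coeff m = coeffOf q (fun i => m i) := by
  rw [coeffOf]
  congr 1
  exact (Finsupp.equivFunOnFinite_symm_coe m).symm

/-- Expansion of a polynomial with support of degree ≤ r in monomials. -/
lemma expand {n r : ℕ} (q : MvPolynomial (Fin n) ℝ)
    (hq : ∀ m : Fin n →₀ ℕ, q.coeff m ≠ 0 → degSum (fun i => m i) ≤ r) :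
    q = ∑ γ : MIdx n r, coeffOf q γ.1 • mono γ.1 := by
  apply MvPolynomial.ext
  intro m
  rw [MvPolynomial.coeff_sum]
  have hterm : ∀ γ : MIdx n r,
      MvPolynomial.coeff m (coeffOf q γ.1 • mono γ.1)
        = coeffOf q γ.1 * (if Finsupp.equivFunOnFinite.symm γ.1 = m then (1:ℝ) else 0) := by
    intro γ
    rw [MvPolynomial.coeff_smul, mono_eq, MvPolynomial.coeff_monomial]
    simp [smul_eq_mul]
  by_cases hm : degSum (fun i => m i) ≤ r
  · rw [Finset.sum_eq_single (⟨fun i => m i, hm⟩ : MIdx n r)]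
    · rw [hterm, if_pos (Finsupp.equivFunOnFinite_symm_coe m), mul_one,
        coeff_eq_coeffOf]
    · intro γ _ hγ
      rw [hterm, if_neg, mul_zero]
      intro hc
      apply hγ
      apply Subtype.ext
      have := congrArg (⇑Finsupp.equivFunOnFinite) hc
      simp at this; exact this
    · intro h; exact absurd (Finset.mem_univ _) h
  · rw [Finset.sum_eq_zero, eq_comm]
    · by_contra hc; exact hm (hq m (fun h => hc h.symm))
    · intro γ _
      rw [hterm, if_neg, mul_zero]
      intro hc
      apply hm
      have := congrArg (⇑Finsupp.equivFunOnFinite) hc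
      have h2 : (fun i => m i) = γ.1 := by
        rw [← hc]
        simp [Finsupp.equivFunOnFinite]
        rfl
      rw [h2]; exact γ.2


lemma Ly_mul_expand {n r : ℕ} (y : (Fin n → ℕ) → ℝ) (q1 q2 : MvPolynomial (Fin n) ℝ)
    (h1 : ∀ m : Fin n →₀ ℕ, q1.coeff m ≠ 0 → degSum (fun i => m i) ≤ r)
    (h2 : ∀ m : Fin n →₀ ℕ, q2.coeff m ≠ 0 → degSum (fun i => m i) ≤ r) :
    Ly y (q1 * q2) = ∑ γ : MIdx n r, ∑ η : MIdx n r,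
      coeffOf q1 γ.1 * coeffOf q2 η.1 * y (γ.1 + η.1) := by
  conv_lhs => rw [expand q1 h1, expand q2 h2]
  rw [Finset.sum_mul_sum, Ly_sum]
  refine Finset.sum_congr rfl fun γ _ => ?_
  rw [Ly_sum]
  refine Finset.sum_congr rfl fun η _ => ?_
  rw [smul_mul_smul_comm, mono_mul, Ly_smul, Ly_mono]

lemma momMat_posDef_of_le {n d r : ℕ} {y : (Fin n → ℕ) → ℝ} (hrd : r ≤ d)
    (hpd : (momMat n d y).PosDef) : (momMat n r y).PosDef := by
  classical
  refine Matrix.PosDef.of_dotProduct_mulVec_pos ?_ ?_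
  · show (momMat n r y)ᴴ = momMat n r y
    ext a b
    simp only [momMat, Matrix.conjTranspose_apply, Matrix.of_apply, star_trivial]
    rw [add_comm]
  · intro x hx
    set g : MIdx n r ↪ MIdx n d :=
      ⟨fun a => ⟨a.1, a.2.trans hrd⟩, fun a b h => Subtype.ext (by simpa using congrArg Subtype.val h)⟩ with hg
    set x' : MIdx n d → ℝ := fun b => if h : degSum b.1 ≤ r then x ⟨b.1, h⟩ else 0 with hx'
    have hxg : ∀ a : MIdx n r, x' (g a) = x a := by
      intro a; show (if h : degSum a.1 ≤ r then x ⟨a.1, h⟩ else 0) = x a; rw [dif_pos a.2]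
    have hzero : ∀ b : MIdx n d, b ∉ Finset.univ.map g → x' b = 0 := by
      intro b hb
      have : ¬ degSum b.1 ≤ r := by
        intro h
        exact hb (Finset.mem_map.mpr ⟨⟨b.1, h⟩, Finset.mem_univ _, Subtype.ext rfl⟩)
      simp [hx', this]
    have hx'ne : x' ≠ 0 := by
      intro hc
      apply hx
      funext a
      have := congrFun hc (g a)
      rw [hxg] at this
      exact this
    have inner : ∀ a : MIdx n r,
        (∑ b : MIdx n d, momMat n d y (g a) b * x' b)
          = ∑ b : MIdx n r, momMat n r y a b * x b := by
      intro a
      rw [← Finset.sum_subset (Finset.subset_univ (Finset.univ.map g))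
        (fun b _ hb => by rw [hzero b hb, mul_zero]), Finset.sum_map]
      exact Finset.sum_congr rfl fun b _ => by rw [hxg]; rfl
    have key : dotProduct (star x) ((momMat n r y) *ᵥ x)
        = dotProduct (star x') ((momMat n d y) *ᵥ x') := by
      simp only [dotProduct, Matrix.mulVec, Pi.star_apply, star_trivial]
      rw [← Finset.sum_subset (Finset.subset_univ (Finset.univ.map g))
        (fun b _ hb => by rw [hzero b hb, zero_mul]), Finset.sum_map]
      refine Finset.sum_congr rfl fun a _ => ?_
      rw [hxg, inner a]
    rw [key]
    exact hpd.dotProduct_mulVec_pos hx'ne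


variable {n d : ℕ} {y : (Fin n → ℕ) → ℝ} {p : (Fin n → ℕ) → MvPolynomial (Fin n) ℝ}

lemma support_le (hp : IsONFamily n d y p) {r : ℕ} (hrd : r ≤ d) (δ : Fin n → ℕ)
    (hδ : degSum δ ≤ r) :
    ∀ m : Fin n →₀ ℕ, (p δ).coeff m ≠ 0 → degSum (fun i => m i) ≤ r := by
  intro m hm
  rw [coeff_eq_coeffOf] at hm
  exact (degSum_le_of_glexLE (hp.span δ (hδ.trans hrd) _ hm)).trans hδ

/-- Coefficient matrix of the orthonormal family, truncated at degree `r`. -/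
noncomputable def Pmat (p : (Fin n → ℕ) → MvPolynomial (Fin n) ℝ) (r : ℕ) :
    Matrix (MIdx n r) (MIdx n r) ℝ :=
  Matrix.of fun δ γ => coeffOf (p δ.1) γ.1

lemma factor (hp : IsONFamily n d y p) {r : ℕ} (hrd : r ≤ d) :
    Pmat p r * momMat n r y * (Pmat p r)ᵀ = 1 := by
  ext δ ε
  rw [Matrix.mul_apply]
  have : ∀ η : MIdx n r, (Pmat p r * momMat n r y) δ η * (Pmat p r)ᵀ η ε
      = ∑ γ : MIdx n r, coeffOf (p δ.1) γ.1 * coeffOf (p ε.1) η.1 * y (γ.1 + η.1) := by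
    intro η
    rw [Matrix.mul_apply, Finset.sum_mul]
    refine Finset.sum_congr rfl fun γ _ => ?_
    simp only [Pmat, momMat, Matrix.of_apply, Matrix.transpose_apply]
    ring
  rw [Finset.sum_congr rfl fun η _ => this η, ← Finset.sum_comm,
    ← Ly_mul_expand y (p δ.1) (p ε.1) (support_le hp hrd δ.1 δ.2) (support_le hp hrd ε.1 ε.2),
    hp.orth δ.1 ε.1 (δ.2.trans hrd) (ε.2.trans hrd), Matrix.one_apply]
  by_cases h : δ = ε
  · rw [if_pos h, if_pos (congrArg Subtype.val h)]
  · rw [if_neg h, if_neg (fun hc => h (Subtype.ext hc))]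

lemma inv_entry (hpd : (momMat n d y).PosDef) (hp : IsONFamily n d y p) {r : ℕ}
    (hrd : r ≤ d) (a b : MIdx n r) :
    (momMat n r y)⁻¹ a b
      = ∑ δ : MIdx n r, coeffOf (p δ.1) a.1 * coeffOf (p δ.1) b.1 := by
  classical
  have hM : (momMat n r y).PosDef := momMat_posDef_of_le hrd hpd
  have h1 : Pmat p r * (momMat n r y * (Pmat p r)ᵀ) = 1 := by
    rw [← Matrix.mul_assoc]; exact factor hp hrd
  have hPdet : IsUnit (Pmat p r).det := by
    have := congrArg Matrix.det h1
    rw [Matrix.det_mul, Matrix.det_one] at this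
    exact IsUnit.of_mul_eq_one _ this
  have hPinv : (Pmat p r)⁻¹ = momMat n r y * (Pmat p r)ᵀ := Matrix.inv_eq_right_inv h1
  have h2 : momMat n r y * ((Pmat p r)ᵀ * Pmat p r) = 1 := by
    rw [← Matrix.mul_assoc, ← hPinv]
    exact Matrix.nonsing_inv_mul _ hPdet
  rw [Matrix.inv_eq_right_inv h2, Matrix.mul_apply]
  refine Finset.sum_congr rfl fun δ _ => ?_
  simp only [Pmat, Matrix.transpose_apply, Matrix.of_apply]

lemma rho_diag_pos (hp : IsONFamily n d y p) {α : Fin n → ℕ} (hα : degSum α ≤ d) :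
    0 < coeffOf (p α) α := by
  classical
  have h1 : Ly y (p α * p α) = 1 := by rw [hp.orth α α hα hα, if_pos rfl]
  have hexp : p α * p α = ∑ γ : MIdx n d, coeffOf (p α) γ.1 • (p α * mono γ.1) := by
    conv_lhs => rw [show p α * p α = p α * p α from rfl]
    nth_rewrite 2 [expand (p α) (support_le hp le_rfl α hα)]
    rw [Finset.mul_sum]
    exact Finset.sum_congr rfl fun γ _ => by rw [mul_smul_comm]
  have h2 : Ly y (p α * p α) = coeffOf (p α) α * Ly y (p α * mono α) := by
    rw [hexp, Ly_sum, Finset.sum_eq_single (⟨α, hα⟩ : MIdx n d)]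
    · rw [Ly_smul]
    · intro γ _ hγ
      rw [Ly_smul]
      by_cases hc : coeffOf (p α) γ.1 = 0
      · rw [hc, zero_mul]
      · have hlt : glexLT γ.1 α := by
          rcases hp.span α hα γ.1 hc with h | h
          · exact h
          · exact absurd (Subtype.ext h) hγ
        rw [hp.lower α γ.1 hα γ.2 hlt, mul_zero]
    · intro h; exact absurd (Finset.mem_univ _) h
  have hpos := hp.pos α hα
  rw [h1] at h2
  nlinarith [hpos, h2]


open scoped Classical in
/-- Number of multi-indices of the same degree that are lex-greater than `α`. -/
noncomputable def mu (n d : ℕ) (α : Fin n → ℕ) : ℕ :=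
  (Finset.univ.filter (fun δ : MIdx n d => degSum δ.1 = degSum α ∧ lexLT α δ.1)).card

open scoped Classical in
lemma mu_lt {δ α : Fin n → ℕ} (hδd : degSum δ ≤ d) (hdeg : degSum δ = degSum α)
    (hlex : lexLT α δ) : mu n d δ < mu n d α := by
  apply Finset.card_lt_card
  constructor
  · intro ε hε
    rw [Finset.mem_filter] at hε ⊢
    exact ⟨hε.1, hε.2.1.trans hdeg, lexLT_trans hlex hε.2.2⟩
  · intro hc
    have hmem : (⟨δ, hδd⟩ : MIdx n d) ∈
        Finset.univ.filter (fun ε : MIdx n d => degSum ε.1 = degSum α ∧ lexLT α ε.1) :=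
      Finset.mem_filter.mpr ⟨Finset.mem_univ _, hdeg, hlex⟩
    have := hc hmem
    rw [Finset.mem_filter] at this
    exact lexLT_irrefl δ this.2.2

lemma fwd_aux (hpd : (momMat n d y).PosDef) (hp : IsONFamily n d y p)
    (hinv : ∀ r, r ≤ d → ∀ a b : MIdx n r,
        r < degSum (fun i => max (a.1 i) (b.1 i)) → (momMat n r y)⁻¹ a b = 0) :
    ∀ N : ℕ, ∀ α γ : Fin n → ℕ, mu n d α < N → degSum α ≤ d →
      ¬ (∀ i, γ i ≤ α i) → coeffOf (p α) γ = 0 := by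
  intro N
  induction N with
  | zero => intro α γ hμ; exact absurd hμ (Nat.not_lt_zero _)
  | succ N ih =>
    intro α γ hμ hαd hγ
    by_contra hne
    have hle : glexLE γ α := hp.span α hαd γ hne
    have hγα : degSum γ ≤ degSum α := degSum_le_of_glexLE hle
    set r := degSum α with hr
    have h0 := hinv r hαd ⟨γ, hγα⟩ ⟨α, le_rfl⟩ (degSum_lt_max hγ)
    rw [inv_entry hpd hp hαd] at h0
    have hsum : (∑ δ : MIdx n r, coeffOf (p δ.1) γ * coeffOf (p δ.1) α)
        = coeffOf (p α) γ * coeffOf (p α) α := by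
      rw [Finset.sum_eq_single (⟨α, le_rfl⟩ : MIdx n r)]
      · intro δ _ hδb
        by_cases hz : coeffOf (p δ.1) α = 0
        · rw [hz, mul_zero]
        · exfalso
          have hδd : degSum δ.1 ≤ d := δ.2.trans hαd
          have hleδ : glexLE α δ.1 := hp.span δ.1 hδd α hz
          have hdegδ : degSum δ.1 = degSum α := le_antisymm δ.2 (degSum_le_of_glexLE hleδ)
          have hlex : lexLT α δ.1 := by
            rcases hleδ with (h | h) | h
            · exact absurd hdegδ (by omega)
            · exact h.2
            · exact absurd (Subtype.ext h.symm) hδb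
          have hμδ : mu n d δ.1 < mu n d α := mu_lt hδd hdegδ hlex
          have hall : ∀ i, α i ≤ δ.1 i := by
            by_contra hc
            exact hz (ih δ.1 α (by omega) hδd hc)
          exact hδb (Subtype.ext (eq_of_le_of_degSum_eq hall hdegδ.symm).symm)
      · intro h; exact absurd (Finset.mem_univ _) h
    rw [hsum] at h0
    have hd := rho_diag_pos hp hαd
    exact hne ((mul_eq_zero.mp h0).resolve_right (ne_of_gt hd))

/-- **Theorem 5.1 (full triangularity theorem).** For `M_d(y)` positive definite: the
`(α,β)` entry of `M_r(y)⁻¹` vanishes whenever `|max(α,β)| > r`, for every `r ≤ d`, if and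
only if the orthonormal polynomials `p_α`, `|α| ≤ d`, all have full triangular form. -/
theorem stmt10 (n d : ℕ) (hn : 1 ≤ n) (y : (Fin n → ℕ) → ℝ)
    (hpd : (momMat n d y).PosDef)
    (p : (Fin n → ℕ) → MvPolynomial (Fin n) ℝ) (hp : IsONFamily n d y p) :
    (∀ r, r ≤ d → ∀ a b : MIdx n r,
        r < degSum (fun i => max (a.1 i) (b.1 i)) → (momMat n r y)⁻¹ a b = 0) ↔
    (∀ α γ : Fin n → ℕ, degSum α ≤ d → ¬ (∀ i, γ i ≤ α i) → coeffOf (p α) γ = 0) := by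
  constructor
  · intro hinv α γ hαd hγ
    exact fwd_aux hpd hp hinv (mu n d α + 1) α γ (Nat.lt_succ_self _) hαd hγ
  · intro htri r hrd a b hmax
    rw [inv_entry hpd hp hrd]
    apply Finset.sum_eq_zero
    intro δ _
    by_cases h1 : coeffOf (p δ.1) a.1 = 0
    · rw [h1, zero_mul]
    by_cases h2 : coeffOf (p δ.1) b.1 = 0
    · rw [h2, mul_zero]
    exfalso
    have hδd : degSum δ.1 ≤ d := δ.2.trans hrd
    have ha : ∀ i, a.1 i ≤ δ.1 i := by
      by_contra hc; exact h1 (htri δ.1 a.1 hδd hc)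
    have hb : ∀ i, b.1 i ≤ δ.1 i := by
      by_contra hc; exact h2 (htri δ.1 b.1 hδd hc)
    have : degSum (fun i => max (a.1 i) (b.1 i)) ≤ r :=
      le_trans (Finset.sum_le_sum (fun i _ => max_le (ha i) (hb i))) δ.2
    omega


end Paper
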